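/- arXiv:1303.5797 — 3 statements merged into one kernel-verified Lean document; each statement's English description precedes it below -/
import Mathlib

section
/- For $\Upsilon_1\in\mathbb{R}$ and $k$ a positive even integer, the $k$-th Fourier coefficient of $jj(\zeta)=\cos\zeta\cdot\exp(-ik\Upsilon_1\sin 2\zeta)$ vanishes: $\frac{1}{2\pi}\int_0^{2\pi}\cos\zeta\,e^{-ik\Upsilon_1\sin 2\zeta}\,e^{-ik\zeta}d\zeta=0$. For $k=2n+1$ odd, this coefficient equals $\frac{1}{2}(-1)^n[J_n((2n+1)\Upsilon_1)-J_{n+1}((2n+1)\Upsilon_1)]$. -/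
/-!
Writing `cos ζ = (e^{iζ} + e^{-iζ}) / 2` turns the coefficient into the mean of the Fourier
coefficients `A (k - 1)` and `A (k + 1)` of `ζ ↦ exp (-i x sin 2ζ)`. Since `sin 2ζ` has period `π`,
`A m` vanishes for odd `m` (the integrand changes sign under `ζ ↦ ζ + π`), which settles even `k`.
For `m = 2p` the substitution `θ = 2ζ` and the shift `θ ↦ θ + π` identify `A (2p)` with
`(-1)^p J_p(x)` through the integral representation of `J_p`.
-/

/-- Bessel function of the first kind of integer order, via its integral
representation. -/
noncomputable def besselJ (n : ℤ) (x : ℝ) : ℝ :=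
  (1 / (2 * Real.pi)) * ∫ τ in (-Real.pi)..Real.pi, Real.cos (n * τ - x * Real.sin τ)

open Real Complex intervalIntegral

section IntervalIntegral

variable {E : Type*} [NormedAddCommGroup E] [NormedSpace ℝ E] {f : ℝ → E}

theorem intervalIntegral_eq_zero_of_odd (hf : ∀ x, f (-x) = -f x) (a : ℝ) :
    ∫ x in -a..a, f x = 0 := by
  have : IsAddTorsionFree E := .of_isTorsionFree ℝ E
  have h := integral_comp_neg (a := -a) (b := a) f
  simp only [hf, intervalIntegral.integral_neg, neg_neg] at h
  exact self_eq_neg.mp h.symm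

theorem Function.Antiperiodic.intervalIntegral_add_two_mul_eq_zero {c : ℝ}
    (hf : Function.Antiperiodic f c) (t : ℝ) :
    ∫ x in t..t + 2 * c, f x = 0 := by
  have : IsAddTorsionFree E := .of_isTorsionFree ℝ E
  have h := hf.periodic_two_mul.intervalIntegral_add_eq (t + c) t
  rw [show t + c + 2 * c = t + 2 * c + c by ring, ← integral_comp_add_right] at h
  simp only [show ∀ x, f (x + c) = -f x from hf, intervalIntegral.integral_neg] at h
  exact self_eq_neg.mp h.symm

theorem Function.Periodic.intervalIntegral_comp_int_mul {T : ℝ} (hf : Function.Periodic f T)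
    (h_int : ∀ t₁ t₂, IntervalIntegrable f MeasureTheory.volume t₁ t₂) {n : ℤ} (hn : n ≠ 0)
    (t : ℝ) : ∫ x in t..t + T, f (n * x) = ∫ x in t..t + T, f x := by
  have hn' : (n : ℝ) ≠ 0 := Int.cast_ne_zero.mpr hn
  rw [integral_comp_mul_left f hn', mul_add, ← zsmul_eq_mul T n,
    hf.intervalIntegral_add_zsmul_eq n _ h_int, hf.intervalIntegral_add_eq _ t,
    ← Int.cast_smul_eq_zsmul ℝ, inv_smul_smul₀ hn']

end IntervalIntegral

theorem integral_exp_mul_I_eq_two_pi_mul_besselJ (n : ℤ) (x : ℝ) :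
    ∫ τ in -π..π, cexp ((x * Real.sin τ - n * τ : ℝ) * I) = (2 * π * besselJ n x : ℝ) := by
  have hsin : ∫ τ in -π..π, Real.sin (x * Real.sin τ - n * τ) = 0 :=
    intervalIntegral_eq_zero_of_odd (fun τ => by
      rw [← Real.sin_neg, Real.sin_neg τ]; ring_nf) π
  simp_rw [exp_mul_I, ← ofReal_cos, ← ofReal_sin]
  rw [integral_add (Continuous.intervalIntegrable (by fun_prop) _ _)
      (Continuous.intervalIntegrable (by fun_prop) _ _),
    integral_mul_const, intervalIntegral.integral_ofReal, intervalIntegral.integral_ofReal, hsin,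
    ofReal_zero, zero_mul, add_zero, besselJ]
  simp_rw [← Real.cos_neg (x * Real.sin _ - _), neg_sub]
  field_simp

/-- `2π` times the `m`-th Fourier coefficient of `ζ ↦ exp (-i x sin 2ζ)`. -/
noncomputable def expSinTwoMulIntegral (x : ℝ) (m : ℤ) : ℂ :=
  ∫ ζ in (0:ℝ)..2 * π, cexp (-(x * Real.sin (2 * ζ) + m * ζ : ℝ) * I)

theorem expSinTwoMulIntegral_of_odd (x : ℝ) {m : ℤ} (hm : Odd m) :
    expSinTwoMulIntegral x m = 0 := by
  have hsign : cexp (m * -(π * I)) = -1 := by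
    rw [exp_int_mul, exp_neg_pi_mul_I, hm.neg_one_zpow]
  have hanti : Function.Antiperiodic
      (fun ζ : ℝ => cexp (-(x * Real.sin (2 * ζ) + m * ζ : ℝ) * I)) π := fun ζ => by
    dsimp only
    conv_rhs => rw [← mul_neg_one, ← hsign, ← Complex.exp_add]
    rw [mul_add 2, Real.sin_add_two_pi]
    push_cast
    ring_nf
  simpa [expSinTwoMulIntegral] using hanti.intervalIntegral_add_two_mul_eq_zero 0

theorem expSinTwoMulIntegral_two_mul (x : ℝ) (p : ℤ) :
    expSinTwoMulIntegral x (2 * p) = (2 * π * besselJ p x : ℝ) * (-1) ^ p := by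
  set g : ℝ → ℂ := fun θ => cexp (-(x * Real.sin θ + p * θ : ℝ) * I) with hg
  have hg_per : Function.Periodic g (2 * π) := fun θ => by
    simp only [hg]
    rw [← mul_one (cexp (_ * I)), ← exp_int_mul_two_pi_mul_I p, ← Complex.exp_add,
      Real.sin_add_two_pi]
    push_cast
    ring_nf
  have hg_shift (θ : ℝ) : g (θ + π) = cexp ((x * Real.sin θ - p * θ : ℝ) * I) * (-1) ^ p := by
    simp only [hg]
    rw [← exp_neg_pi_mul_I, ← exp_int_mul, ← Complex.exp_add, Real.sin_add_pi]
    push_cast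
    ring_nf
  calc expSinTwoMulIntegral x (2 * p) = ∫ ζ in (0:ℝ)..0 + 2 * π, g ((2 : ℤ) * ζ) := by
        rw [expSinTwoMulIntegral, zero_add]
        congr 1 with ζ
        simp only [hg]
        push_cast
        ring_nf
    _ = ∫ θ in (0:ℝ)..0 + 2 * π, g θ :=
        hg_per.intervalIntegral_comp_int_mul
          (fun _ _ => (by fun_prop : Continuous g).intervalIntegrable _ _) two_ne_zero 0
    _ = ∫ θ in -π..π, g (θ + π) := by
        rw [integral_comp_add_right]
        ring_nf
    _ = _ := by
        simp_rw [hg_shift]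
        rw [integral_mul_const, integral_exp_mul_I_eq_two_pi_mul_besselJ]

theorem integral_cos_mul_exp_mul_exp_eq_average (x : ℝ) (k : ℤ) :
    ∫ ζ in (0:ℝ)..2 * π,
        (Real.cos ζ : ℂ) * cexp (-I * (x * Real.sin (2 * ζ) : ℝ)) * cexp (-I * (k : ℂ) * ζ)
      = (expSinTwoMulIntegral x (k - 1) + expSinTwoMulIntegral x (k + 1)) / 2 := by
  have h (ζ : ℝ) : (Real.cos ζ : ℂ) * cexp (-I * (x * Real.sin (2 * ζ) : ℝ)) * cexp (-I * k * ζ)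
      = (cexp (-(x * Real.sin (2 * ζ) + (k - 1 : ℤ) * ζ : ℝ) * I)
        + cexp (-(x * Real.sin (2 * ζ) + (k + 1 : ℤ) * ζ : ℝ) * I)) / 2 := by
    rw [ofReal_cos, Complex.cos, div_mul_eq_mul_div, div_mul_eq_mul_div, add_mul, add_mul,
      ← Complex.exp_add, ← Complex.exp_add, ← Complex.exp_add, ← Complex.exp_add]
    congr 2 <;> congr 1 <;> push_cast <;> ring
  simp_rw [h]
  rw [intervalIntegral.integral_div, integral_add (Continuous.intervalIntegrable (by fun_prop) _ _)
    (Continuous.intervalIntegrable (by fun_prop) _ _), expSinTwoMulIntegral, expSinTwoMulIntegral]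

theorem stmt_5_general (Υ₁ : ℝ) (k : ℕ) :
    (Even k → (1 / (2 * Real.pi) : ℂ) * (∫ ζ in (0:ℝ)..(2 * Real.pi),
        ((Real.cos ζ : ℝ) : ℂ) *
          Complex.exp (-Complex.I * ((k * Υ₁ * Real.sin (2 * ζ) : ℝ) : ℂ)) *
          Complex.exp (-Complex.I * (k : ℂ) * (ζ : ℂ))) = 0) ∧
    (∀ n : ℕ, k = 2 * n + 1 →
      (1 / (2 * Real.pi) : ℂ) * (∫ ζ in (0:ℝ)..(2 * Real.pi),
        ((Real.cos ζ : ℝ) : ℂ) *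
          Complex.exp (-Complex.I * ((k * Υ₁ * Real.sin (2 * ζ) : ℝ) : ℂ)) *
          Complex.exp (-Complex.I * (k : ℂ) * (ζ : ℂ)))
        = ((1/2 * (-1)^n *
            (besselJ n ((2 * n + 1) * Υ₁) - besselJ (n + 1) ((2 * n + 1) * Υ₁)) : ℝ) : ℂ)) := by
  have hsplit := integral_cos_mul_exp_mul_exp_eq_average (k * Υ₁) k
  rw [Int.cast_natCast] at hsplit
  refine ⟨fun hk => ?_, fun n hn => ?_⟩
  · have hk' : Even (k : ℤ) := (Int.even_coe_nat k).mpr hk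
    rw [hsplit, expSinTwoMulIntegral_of_odd _ (hk'.sub_odd odd_one),
      expSinTwoMulIntegral_of_odd _ hk'.add_one]
    simp
  · have hx : (k : ℝ) * Υ₁ = (2 * n + 1) * Υ₁ := by rw [hn]; push_cast; ring
    rw [hsplit, show (k : ℤ) - 1 = 2 * n by omega, show (k : ℤ) + 1 = 2 * (n + 1) by omega,
      expSinTwoMulIntegral_two_mul, expSinTwoMulIntegral_two_mul, hx, zpow_add_one₀ (by norm_num),
      zpow_natCast]
    push_cast
    field_simp
    ring

/-- The k-th Fourier coefficient of `cos ζ · exp(-ik Υ₁ sin 2ζ)` vanishes for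
even k and equals the standard FEL coupling factor for odd k = 2n+1. -/
theorem stmt_5 (Υ₁ : ℝ) (k : ℕ) (hk : 0 < k) :
    (Even k → (1 / (2 * Real.pi) : ℂ) * (∫ ζ in (0:ℝ)..(2 * Real.pi),
        ((Real.cos ζ : ℝ) : ℂ) *
          Complex.exp (-Complex.I * ((k * Υ₁ * Real.sin (2 * ζ) : ℝ) : ℂ)) *
          Complex.exp (-Complex.I * (k : ℂ) * (ζ : ℂ))) = 0) ∧
    (∀ n : ℕ, k = 2 * n + 1 →
      (1 / (2 * Real.pi) : ℂ) * (∫ ζ in (0:ℝ)..(2 * Real.pi),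
        ((Real.cos ζ : ℝ) : ℂ) *
          Complex.exp (-Complex.I * ((k * Υ₁ * Real.sin (2 * ζ) : ℝ) : ℂ)) *
          Complex.exp (-Complex.I * (k : ℂ) * (ζ : ℂ)))
        = ((1/2 * (-1)^n *
            (besselJ n ((2 * n + 1) * Υ₁) - besselJ (n + 1) ((2 * n + 1) * Υ₁)) : ℝ) : ℂ)) :=
  stmt_5_general Υ₁ k
end

section
/- Let $v:[0,\infty)\to\mathbb{R}$ be $C^1$ with $|v(s)|\le M$ and $|v'(s)|\le \eps L$ for all $s$, for constants $M,L\ge 0$ and $\eps>0$. Let $k$ be a nonzero integer and $a\in\mathbb{R}$. Then for $0\le\zeta\le T/\eps$: $\Big|\int_0^\zeta e^{i[v(s)-\eps a s]}e^{iks}\,ds\Big|\le\frac{1}{|k|}\big(2+T(|a|+L)\big)$. -/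
/-!
Integrate by parts against the antiderivative `e^{iks}/(ik)`, whose modulus is `1/|k|`. The two
boundary terms contribute at most `2/|k|`; the remaining integral involves the derivative of the
unimodular factor `e^{iφ}`, i.e. `φ' e^{iφ}` with `|φ'| = |v' - εa| ≤ ε(|a| + L)`, so over an
interval of length `ζ ≤ T/ε` it contributes at most `T(|a| + L)/|k|`.
-/

open MeasureTheory intervalIntegral Complex Set

theorem hasDerivAt_cexp_I_mul_div {ω : ℝ} (hω : ω ≠ 0) (x : ℝ) :
    HasDerivAt (fun x : ℝ => exp (I * ω * x) / (I * ω)) (exp (I * ω * x)) x := by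
  have hIω : I * (ω : ℂ) ≠ 0 := mul_ne_zero I_ne_zero (ofReal_ne_zero.mpr hω)
  have := (((hasDerivAt_id (x : ℂ)).const_mul (I * ω)).comp_ofReal.cexp).div_const (I * ω)
  simpa [hIω] using this

theorem norm_integral_mul_cexp_I_mul_le {f f' : ℝ → ℂ} {a b ω A B : ℝ} (hω : ω ≠ 0)
    (hf : ∀ x ∈ uIcc a b, HasDerivAt f (f' x) x) (hf' : IntervalIntegrable f' volume a b)
    (hA : ∀ x ∈ uIcc a b, ‖f x‖ ≤ A) (hB : ∀ x ∈ uIcc a b, ‖f' x‖ ≤ B) :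
    ‖∫ x in a..b, f x * exp (I * ω * x)‖ ≤ (2 * A + B * |b - a|) / |ω| := by
  set G : ℝ → ℂ := fun x => exp (I * ω * x) / (I * ω)
  have hG : ∀ x, ‖G x‖ = 1 / |ω| := fun x => by
    simp [G, norm_exp, mul_assoc]
  have hibp := intervalIntegral.integral_mul_deriv_eq_deriv_mul hf
    (fun x _ => hasDerivAt_cexp_I_mul_div hω x) hf'
    ((by fun_prop : Continuous fun x : ℝ => exp (I * ω * x)).intervalIntegrable a b)
  have hboundary : ∀ x ∈ uIcc a b, ‖f x * G x‖ ≤ A / |ω| := fun x hx => by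
    rw [norm_mul, hG, mul_one_div]
    gcongr
    exact hA x hx
  have hbulk : ‖∫ x in a..b, f' x * G x‖ ≤ B / |ω| * |b - a| :=
    norm_integral_le_of_norm_le_const fun x hx => by
      rw [norm_mul, hG, mul_one_div]
      gcongr
      exact hB x (uIoc_subset_uIcc hx)
  calc ‖∫ x in a..b, f x * exp (I * ω * x)‖
      ≤ ‖f b * G b‖ + ‖f a * G a‖ + ‖∫ x in a..b, f' x * G x‖ := by
        rw [hibp]
        exact (norm_sub_le _ _).trans (by gcongr; exact norm_sub_le _ _)
    _ ≤ A / |ω| + A / |ω| + B / |ω| * |b - a| := by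
        gcongr
        exacts [hboundary b right_mem_uIcc, hboundary a left_mem_uIcc]
    _ = (2 * A + B * |b - a|) / |ω| := by ring

theorem norm_integral_cexp_phase_mul_cexp_I_mul_le {φ φ' : ℝ → ℝ} {a b ω B : ℝ} (hω : ω ≠ 0)
    (hφ : ∀ x, HasDerivAt φ (φ' x) x) (hB : ∀ x, |φ' x| ≤ B) :
    ‖∫ x in a..b, exp (I * φ x) * exp (I * ω * x)‖ ≤ (2 + B * |b - a|) / |ω| := by
  have hderiv : ∀ x, HasDerivAt (fun x => exp (I * φ x)) (I * φ' x * exp (I * φ x)) x :=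
    fun x => by simpa [mul_comm] using ((hφ x).ofReal_comp.const_mul I).cexp
  have hφ'_meas : Measurable φ' := by
    rw [show φ' = deriv φ from funext fun x => (hφ x).deriv.symm]
    exact measurable_deriv φ
  have hφ_cont : Continuous φ := continuous_iff_continuousAt.mpr fun x => (hφ x).continuousAt
  have hnorm_deriv : ∀ x, ‖I * φ' x * exp (I * φ x)‖ ≤ B := fun x => by
    simpa [norm_exp] using hB x
  have hint : IntervalIntegrable (fun x => I * φ' x * exp (I * φ x)) volume a b := by
    refine (intervalIntegrable_const (c := B)).mono_fun' ?_ (.of_forall hnorm_deriv)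
    exact (by fun_prop : Measurable fun x => I * φ' x * exp (I * φ x)).aestronglyMeasurable
  simpa using norm_integral_mul_cexp_I_mul_le hω (fun x _ => hderiv x) hint
    (A := 1) (fun x _ => by simp [norm_exp]) (fun x _ => hnorm_deriv x)

theorem stmt_12_general (v v' : ℝ → ℝ) (L ε T : ℝ) (hL : 0 ≤ L) (hε : 0 < ε)
    (hd : ∀ s, HasDerivAt v (v' s) s)
    (hvL : ∀ s, |v' s| ≤ ε * L)
    (k : ℤ) (hk : k ≠ 0) (a : ℝ) :
    ∀ ζ : ℝ, 0 ≤ ζ → ζ ≤ T / ε →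
      ‖∫ s in (0:ℝ)..ζ,
        Complex.exp (Complex.I * ((v s - ε * a * s : ℝ) : ℂ)) *
          Complex.exp (Complex.I * (k : ℂ) * (s : ℂ))‖
      ≤ (1 / |(k : ℝ)|) * (2 + T * (|a| + L)) := by
  intro ζ hζ0 hζT
  have hphase : ∀ s, HasDerivAt (fun s => v s - ε * a * s) (v' s - ε * a) s := fun s =>
    (hd s).sub (by simpa using (hasDerivAt_id s).const_mul (ε * a))
  have hphase' : ∀ s, |v' s - ε * a| ≤ ε * (|a| + L) := fun s => by
    calc |v' s - ε * a| ≤ |v' s| + ε * |a| := by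
          simpa [abs_mul, abs_of_pos hε] using abs_sub (v' s) (ε * a)
      _ ≤ ε * (|a| + L) := by linarith [hvL s]
  have hεζ : ε * ζ ≤ T := by rwa [le_div_iff₀' hε] at hζT
  have key := norm_integral_cexp_phase_mul_cexp_I_mul_le (a := 0) (b := ζ)
    (Int.cast_ne_zero.mpr hk) hphase hphase'
  rw [ofReal_intCast, sub_zero, abs_of_nonneg hζ0] at key
  have hdrift : ε * (|a| + L) * ζ ≤ T * (|a| + L) := by nlinarith [abs_nonneg a]
  calc _ ≤ (2 + ε * (|a| + L) * ζ) / |(k : ℝ)| := key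
    _ ≤ (2 + T * (|a| + L)) / |(k : ℝ)| := by gcongr
    _ = _ := (one_div_mul_eq_div _ _).symm

/-- Integration-by-parts estimate for an oscillatory integral with a slowly
varying phase perturbation; key estimate for the near-to-resonant Besjes
term. -/
theorem stmt_12 (v v' : ℝ → ℝ) (M L ε T : ℝ) (hM : 0 ≤ M) (hL : 0 ≤ L) (hε : 0 < ε)
    (hd : ∀ s, HasDerivAt v (v' s) s)
    (hvM : ∀ s, |v s| ≤ M) (hvL : ∀ s, |v' s| ≤ ε * L)
    (k : ℤ) (hk : k ≠ 0) (a : ℝ) :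
    ∀ ζ : ℝ, 0 ≤ ζ → ζ ≤ T / ε →
      ‖∫ s in (0:ℝ)..ζ,
        Complex.exp (Complex.I * ((v s - ε * a * s : ℝ) : ℂ)) *
          Complex.exp (Complex.I * (k : ℂ) * (s : ℂ))‖
      ≤ (1 / |(k : ℝ)|) * (2 + T * (|a| + L)) :=
  stmt_12_general v v' L ε T hL hε hd hvL k hk a
end

section
/- Let $(x_1,x_2)$ solve $x_1'=x_2$, $x_2'=-\epsilon\sin x_1$ with $x_1(0)=\xi$, $x_2(0)=1$, where $0<\epsilon$. Then for all $s\in[0,T]$: $|x_1(s)-(s+\xi)|\le 2\sqrt{\epsilon}\sinh(\sqrt{\epsilon}T)$ and $|x_2(s)-1|\le 2\epsilon\cosh(\sqrt{\epsilon}T)$. -/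
/-!
Put `u = x₁ - (s + ξ)` and `v = x₂ - 1 + ε (cos ξ - cos (s + ξ))`. Then `|u'| ≤ |v| + 2ε` and,
since `sin` is 1-Lipschitz, `|v'| ≤ ε |u|`: subtracting the oscillating term makes `v'` small
with `u` instead of merely bounded by `ε`, which would only give linear growth. The integrals
`V = ∫ ε |u|` and `U = ∫ (V + 2ε)` are differentiable majorants of `|v|` and `|u|` with
`U' = V + 2ε` and `V' ≤ ε U`. Hence `P = U - A`, `Q = V - B`, where `(A, B)` is the solution
`(2√ε sinh (√ε s), 2ε (cosh (√ε s) - 1))` of the comparison system, satisfy `P' = Q`,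
`Q' ≤ ε P`, and both stay nonpositive because `Q cosh (√ε s) - √ε P sinh (√ε s)` is antitone
and `(P / cosh (√ε s))'` is that quantity divided by `cosh² (√ε s)`.
-/

open Real Set

theorem image_le_of_hasDerivAt_nonpos {a t : ℝ} {f f' : ℝ → ℝ}
    (hf : ∀ x, HasDerivAt f (f' x) x) (hf' : ∀ x, a < x → f' x ≤ 0) (ht : a ≤ t) :
    f t ≤ f a := by
  refine antitoneOn_of_hasDerivWithinAt_nonpos (convex_Ici a)
    (fun x _ => (hf x).continuousAt.continuousWithinAt) (fun x _ => (hf x).hasDerivWithinAt)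
    (fun x hx => hf' x ?_) (mem_Ici.2 le_rfl) ht ht
  rwa [interior_Ici] at hx

theorem norm_le_integral_of_norm_deriv_le {E : Type*} [NormedAddCommGroup E] [NormedSpace ℝ E]
    {a t : ℝ} {f f' : ℝ → E} {g : ℝ → ℝ} (hf : ∀ x, HasDerivAt f (f' x) x) (hg : Continuous g)
    (hbound : ∀ x, a ≤ x → ‖f' x‖ ≤ g x) (ha : f a = 0) (ht : a ≤ t) :
    ‖f t‖ ≤ ∫ r in a..t, g r :=
  image_norm_le_of_norm_deriv_right_le_deriv_boundary
    (fun x _ => (hf x).continuousAt.continuousWithinAt) (fun x _ => (hf x).hasDerivWithinAt)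
    (by simp [ha]) (fun x => (hg.integral_hasStrictDerivAt a x).hasDerivAt)
    (fun x hx => hbound x hx.1) ⟨ht, le_rfl⟩

theorem hasDerivAt_sinh_mul (σ t : ℝ) :
    HasDerivAt (fun t => sinh (σ * t)) (σ * cosh (σ * t)) t := by
  simpa [mul_comm] using ((hasDerivAt_id t).const_mul σ).sinh

theorem hasDerivAt_cosh_mul (σ t : ℝ) :
    HasDerivAt (fun t => cosh (σ * t)) (σ * sinh (σ * t)) t := by
  simpa [mul_comm] using ((hasDerivAt_id t).const_mul σ).cosh

theorem mul_sinh_mul_nonneg (σ : ℝ) {t : ℝ} (ht : 0 ≤ t) : 0 ≤ σ * sinh (σ * t) := by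
  rcases le_total 0 σ with hσ | hσ
  · exact mul_nonneg hσ (sinh_nonneg_iff.2 (mul_nonneg hσ ht))
  · exact mul_nonneg_of_nonpos_of_nonpos hσ
      (sinh_nonpos_iff.2 (mul_nonpos_of_nonpos_of_nonneg hσ ht))

theorem nonpos_of_hasDerivAt_le_sq_mul {σ t : ℝ} {P Q Q' : ℝ → ℝ}
    (hP : ∀ x, HasDerivAt P (Q x) x) (hQ : ∀ x, HasDerivAt Q (Q' x) x)
    (hQ' : ∀ x, 0 ≤ x → Q' x ≤ σ ^ 2 * P x) (hP0 : P 0 = 0) (hQ0 : Q 0 = 0) (ht : 0 ≤ t) :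
    P t ≤ 0 ∧ Q t ≤ 0 := by
  set W : ℝ → ℝ := fun x => Q x * cosh (σ * x) - σ * P x * sinh (σ * x)
  have hW : ∀ x, 0 ≤ x → W x ≤ 0 := by
    intro x hx
    have hW' : ∀ x, HasDerivAt W ((Q' x - σ ^ 2 * P x) * cosh (σ * x)) x := fun x =>
      (((hQ x).mul (hasDerivAt_cosh_mul σ x)).sub
        (((hP x).const_mul σ).mul (hasDerivAt_sinh_mul σ x))).congr_deriv (by ring)
    have := image_le_of_hasDerivAt_nonpos hW' (fun y hy => mul_nonpos_of_nonpos_of_nonneg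
      (sub_nonpos.2 (hQ' y hy.le)) (cosh_pos _).le) hx
    simpa [W, hQ0, hP0] using this
  have hR : P t / cosh (σ * t) ≤ 0 := by
    have hR' : ∀ x, HasDerivAt (fun x => P x / cosh (σ * x)) (W x / cosh (σ * x) ^ 2) x :=
      fun x => ((hP x).div (hasDerivAt_cosh_mul σ x) (cosh_pos _).ne').congr_deriv (by ring)
    simpa [hP0] using image_le_of_hasDerivAt_nonpos hR'
      (fun x hx => div_nonpos_of_nonpos_of_nonneg (hW x hx.le) (sq_nonneg _)) ht
  have hPt : P t ≤ 0 := by simpa using (div_le_iff₀ (cosh_pos _)).1 hR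
  refine ⟨hPt, nonpos_of_mul_nonpos_left ?_ (cosh_pos (σ * t))⟩
  nlinarith [hW t ht, mul_sinh_mul_nonneg σ ht]

theorem abs_le_of_coupled_deriv_le {σ c t : ℝ} (hσ : σ ≠ 0) {u v u' v' : ℝ → ℝ}
    (hu : ∀ x, HasDerivAt u (u' x) x) (hv : ∀ x, HasDerivAt v (v' x) x)
    (hu0 : u 0 = 0) (hv0 : v 0 = 0)
    (hu' : ∀ x, 0 ≤ x → |u' x| ≤ |v x| + c) (hv' : ∀ x, 0 ≤ x → |v' x| ≤ σ ^ 2 * |u x|)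
    (ht : 0 ≤ t) :
    |u t| ≤ c / σ * sinh (σ * t) ∧ |v t| ≤ c * (cosh (σ * t) - 1) := by
  have hu_cont : Continuous u := continuous_iff_continuousAt.2 fun x => (hu x).continuousAt
  set V : ℝ → ℝ := fun x => ∫ r in 0..x, σ ^ 2 * |u r|
  have hV : ∀ x, HasDerivAt V (σ ^ 2 * |u x|) x := fun x =>
    ((continuous_const.mul hu_cont.abs).integral_hasStrictDerivAt 0 x).hasDerivAt
  have hV_cont : Continuous V := continuous_iff_continuousAt.2 fun x => (hV x).continuousAt
  set U : ℝ → ℝ := fun x => ∫ r in 0..x, (V r + c)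
  have hU : ∀ x, HasDerivAt U (V x + c) x := fun x =>
    ((hV_cont.add continuous_const).integral_hasStrictDerivAt 0 x).hasDerivAt
  have hvV : ∀ x, 0 ≤ x → |v x| ≤ V x := fun x hx =>
    norm_le_integral_of_norm_deriv_le hv (continuous_const.mul hu_cont.abs) hv' hv0 hx
  have huU : ∀ x, 0 ≤ x → |u x| ≤ U x := fun x hx =>
    norm_le_integral_of_norm_deriv_le hu (hV_cont.add continuous_const)
      (fun y hy => (hu' y hy).trans (by linarith [hvV y hy])) hu0 hx
  have hP : ∀ x, HasDerivAt (fun x => U x - c / σ * sinh (σ * x))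
      (V x - c * (cosh (σ * x) - 1)) x := fun x =>
    ((hU x).sub ((hasDerivAt_sinh_mul σ x).const_mul (c / σ))).congr_deriv (by field_simp; ring)
  have hQ : ∀ x, HasDerivAt (fun x => V x - c * (cosh (σ * x) - 1))
      (σ ^ 2 * |u x| - c * (σ * sinh (σ * x))) x := fun x =>
    (hV x).sub (((hasDerivAt_cosh_mul σ x).sub_const 1).const_mul c)
  have hQ' : ∀ x, 0 ≤ x →
      σ ^ 2 * |u x| - c * (σ * sinh (σ * x)) ≤ σ ^ 2 * (U x - c / σ * sinh (σ * x)) := by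
    intro x hx
    have hexpand : σ ^ 2 * (U x - c / σ * sinh (σ * x)) = σ ^ 2 * U x - c * (σ * sinh (σ * x)) := by
      field_simp
    rw [hexpand]
    linarith [mul_le_mul_of_nonneg_left (huU x hx) (sq_nonneg σ)]
  obtain ⟨hPt, hQt⟩ := nonpos_of_hasDerivAt_le_sq_mul hP hQ hQ' (by simp [U]) (by simp [V]) ht
  exact ⟨(huU t ht).trans (by linarith), (hvV t ht).trans (by linarith)⟩

theorem abs_cos_sub_cos_le_two (a b : ℝ) : |cos a - cos b| ≤ 2 :=
  (abs_sub _ _).trans (by linarith [abs_cos_le_one a, abs_cos_le_one b])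

theorem pendulum_abs_sub_le {ε ξ s : ℝ} (hε : 0 < ε) {x₁ x₂ : ℝ → ℝ}
    (h₁ : ∀ t, HasDerivAt x₁ (x₂ t) t) (h₂ : ∀ t, HasDerivAt x₂ (-ε * sin (x₁ t)) t)
    (h10 : x₁ 0 = ξ) (h20 : x₂ 0 = 1) (hs : 0 ≤ s) :
    |x₁ s - (s + ξ)| ≤ 2 * √ε * sinh (√ε * s) ∧ |x₂ s - 1| ≤ 2 * ε * cosh (√ε * s) := by
  set σ := √ε
  have hσ : 0 < σ := sqrt_pos.2 hε
  have hεσ : ε = σ ^ 2 := (sq_sqrt hε.le).symm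
  set u : ℝ → ℝ := fun t => x₁ t - (t + ξ)
  set v : ℝ → ℝ := fun t => x₂ t - 1 + ε * (cos ξ - cos (t + ξ))
  have hu : ∀ t, HasDerivAt u (x₂ t - 1) t := fun t =>
    (h₁ t).sub ((hasDerivAt_id' t).add_const ξ)
  have hv : ∀ t, HasDerivAt v (ε * (sin (t + ξ) - sin (x₁ t))) t := fun t =>
    (((h₂ t).sub_const 1).add (((hasDerivAt_id' t).add_const ξ).cos.const_sub _ |>.const_mul ε))
      |>.congr_deriv (by ring)
  have hx₂ : ∀ t, |x₂ t - 1| ≤ |v t| + 2 * ε := fun t => by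
    calc |x₂ t - 1| = |v t - ε * (cos ξ - cos (t + ξ))| := by simp [v]
      _ ≤ |v t| + ε * 2 := by grw [abs_sub, abs_mul, abs_of_pos hε, abs_cos_sub_cos_le_two]
      _ = |v t| + 2 * ε := by ring
  have hv' : ∀ t, |ε * (sin (t + ξ) - sin (x₁ t))| ≤ σ ^ 2 * |u t| := fun t => by
    rw [abs_mul, abs_of_pos hε, hεσ, abs_sub_comm]
    exact mul_le_mul_of_nonneg_left (abs_sin_sub_sin_le _ _) (sq_nonneg σ)
  obtain ⟨hus, hvs⟩ := abs_le_of_coupled_deriv_le hσ.ne' hu hv (by simp [u, h10])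
    (by simp [v, h20]) (fun t _ => hx₂ t) (fun t _ => hv' t) hs
  refine ⟨hus.trans_eq ?_, by linarith [hx₂ s]⟩
  rw [hεσ]
  field_simp

theorem stmt_19_general (ε T ξ : ℝ) (hε : 0 < ε)
    (x₁ x₂ : ℝ → ℝ)
    (h₁ : ∀ s, HasDerivAt x₁ (x₂ s) s)
    (h₂ : ∀ s, HasDerivAt x₂ (-ε * Real.sin (x₁ s)) s)
    (h10 : x₁ 0 = ξ) (h20 : x₂ 0 = 1) :
    ∀ s ∈ Set.Icc (0:ℝ) T,
      |x₁ s - (s + ξ)| ≤ 2 * Real.sqrt ε * Real.sinh (Real.sqrt ε * T) ∧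
      |x₂ s - 1| ≤ 2 * ε * Real.cosh (Real.sqrt ε * T) := by
  intro s hs
  obtain ⟨hx₁s, hx₂s⟩ := pendulum_abs_sub_le hε h₁ h₂ h10 h20 hs.1
  have hσs₀ : 0 ≤ √ε * s := mul_nonneg (sqrt_nonneg ε) hs.1
  have hσs : √ε * s ≤ √ε * T := mul_le_mul_of_nonneg_left hs.2 (sqrt_nonneg ε)
  refine ⟨hx₁s.trans ?_, hx₂s.trans ?_⟩
  · gcongr
    exact sinh_le_sinh.2 hσs
  · gcongr
    rwa [cosh_le_cosh, abs_of_nonneg hσs₀, abs_of_nonneg (hσs₀.trans hσs)]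

/-- Rigorous error bound for the zeroth-order regular perturbation
approximation of the weakly nonlinear pendulum in the rotation regime. -/
theorem stmt_19 (ε T ξ : ℝ) (hε : 0 < ε) (hT : 0 ≤ T)
    (x₁ x₂ : ℝ → ℝ)
    (h₁ : ∀ s, HasDerivAt x₁ (x₂ s) s)
    (h₂ : ∀ s, HasDerivAt x₂ (-ε * Real.sin (x₁ s)) s)
    (h10 : x₁ 0 = ξ) (h20 : x₂ 0 = 1) :
    ∀ s ∈ Set.Icc (0:ℝ) T,
      |x₁ s - (s + ξ)| ≤ 2 * Real.sqrt ε * Real.sinh (Real.sqrt ε * T) ∧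
      |x₂ s - 1| ≤ 2 * ε * Real.cosh (Real.sqrt ε * T) :=
  stmt_19_general ε T ξ hε x₁ x₂ h₁ h₂ h10 h20
end
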